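/- Let n_rad ≥ 1, n_orb ≥ 1, n = n_rad + n_orb, fix 1 ≤ y ≤ n_rad, and let Z_y = I₂^{⊗(y−1)} ⊗ Z ⊗ I₂^{⊗(n−y)}. For each sign ε ∈ {+1,−1}, the sum over all nontrivial Pauli strings P on n_rad qubits (P ≠ I₂^{⊗ n_rad}) of |⟨B_P^{(ε)}, Z_y⟩_HS|², where B_P^{(ε)} = 2^{−n/2} · P ⊗ ((I₂ + ε·Z)/√2) ⊗ I₂^{⊗(n_orb−1)}, equals 2^{n−1}. (This is the 𝔤_±-purity of the measured observable Z_y.) -/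

import Mathlib

open Matrix Complex

attribute [local instance 100] LieRing.ofAssociativeRing

noncomputable section

abbrev QMat (n : ℕ) := Matrix (Fin n → Fin 2) (Fin n → Fin 2) ℂ

def PX : Matrix (Fin 2) (Fin 2) ℂ := !![0, 1; 1, 0]
def PY : Matrix (Fin 2) (Fin 2) ℂ := !![0, -Complex.I; Complex.I, 0]
def PZ : Matrix (Fin 2) (Fin 2) ℂ := !![1, 0; 0, -1]

/-- The tensor (Kronecker) product of a family of single-qubit matrices. -/
def tens {n : ℕ} (As : Fin n → Matrix (Fin 2) (Fin 2) ℂ) : QMat n :=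
  Matrix.of fun f g => ∏ k, As k (f k) (g k)

/-- A single-qubit matrix `A` acting on qubit `j` (tensored with identity elsewhere). -/
def onQubit {n : ℕ} (A : Matrix (Fin 2) (Fin 2) ℂ) (j : Fin n) : QMat n :=
  tens fun k => if k = j then A else 1

/-- The Kronecker product of an `a`-qubit matrix and a `b`-qubit matrix. -/
def kron {a b : ℕ} (M : QMat a) (N : QMat b) : QMat (a + b) :=
  Matrix.of fun f g =>
    M (fun i => f (Fin.castAdd b i)) (fun i => g (Fin.castAdd b i)) *
      N (fun i => f (Fin.natAdd a i)) (fun i => g (Fin.natAdd a i))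

/-- The generator of the CZ gate on qubits `j`, `j'`. -/
def czGen {n : ℕ} (j j' : Fin n) : QMat n :=
  (-(Real.pi / 4) : ℂ) • (1 - onQubit PZ j - onQubit PZ j' + onQubit PZ j * onQubit PZ j')

/-- The generators of the rotationally equivariant model: `i X_j, i Y_j, i Z_j` on the
first `nrad` qubits, and `i cz_{j,j+1}` for all neighbouring pairs. -/
def genSet (nrad norb : ℕ) : Set (QMat (nrad + norb)) :=
  {M | ∃ j : Fin (nrad + norb), (j : ℕ) < nrad ∧
      (M = Complex.I • onQubit PX j ∨ M = Complex.I • onQubit PY j ∨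
        M = Complex.I • onQubit PZ j)} ∪
  {M | ∃ (j : ℕ) (h : j + 1 < nrad + norb),
      M = Complex.I • czGen ⟨j, lt_of_le_of_lt (Nat.le_succ j) h⟩ ⟨j + 1, h⟩}

/-- The dynamical Lie algebra: the smallest real Lie subalgebra of the `2^n × 2^n` complex
matrices containing the generators. -/
def DLA (nrad norb : ℕ) : LieSubalgebra ℝ (QMat (nrad + norb)) :=
  LieSubalgebra.lieSpan ℝ _ (genSet nrad norb)


/-- The Hilbert–Schmidt inner product `⟨A, B⟩ = Tr(Aᴴ B)`. -/
def hsInner {n : ℕ} (A B : QMat n) : ℂ := (Aᴴ * B).trace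

/-- The four single-qubit Pauli matrices `I₂, X, Y, Z`. -/
def pauli : Fin 4 → Matrix (Fin 2) (Fin 2) ℂ := ![1, PX, PY, PZ]

/-- `B_P^{(ε)} = 2^{-n/2} P ⊗ ((I₂ + ε Z)/√2) ⊗ I₂^{⊗(n_orb-1)}`. -/
def Bbasis (nrad norb : ℕ) (hb : 0 < norb) (P : QMat nrad) (ε : ℂ) : QMat (nrad + norb) :=
  ((Real.sqrt (2 ^ (nrad + norb)))⁻¹ : ℝ) •
    kron P (onQubit (((Real.sqrt 2)⁻¹ : ℝ) • ((1 : Matrix (Fin 2) (Fin 2) ℂ) + ε • PZ))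
      (⟨0, hb⟩ : Fin norb))

/-! Both `B_P^{(ε)}` and `Z_y` are Kronecker products of a radial and an orbital factor, and the
Hilbert–Schmidt product factors accordingly. Pauli strings are orthogonal, so on the radial
register only the string with `Z` at qubit `y` contributes, with weight `2^{n_rad}`. On the orbital register the product is
`Tr((I₂ + εZ)/√2) · 2^{n_orb-1} = √2 · 2^{n_orb-1}` for every `ε`, since `Z` is traceless.
Squaring and multiplying by the normalisation `2^{-n}` gives `2^{n-1}`. -/

open scoped Kronecker

theorem kron_eq_reindex_kronecker {a b : ℕ} (M : QMat a) (N : QMat b) :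
    kron M N = reindex (Fin.appendEquiv a b) (Fin.appendEquiv a b) (M ⊗ₖ N) := by
  ext f g
  simp [kron]

theorem kron_tens {a b : ℕ} (As : Fin a → Matrix (Fin 2) (Fin 2) ℂ)
    (Bs : Fin b → Matrix (Fin 2) (Fin 2) ℂ) :
    kron (tens As) (tens Bs) = tens (Fin.addCases As Bs) := by
  ext f g
  simp [kron, tens, Fin.prod_univ_add]

theorem tens_one {n : ℕ} : tens (fun _ : Fin n => (1 : Matrix (Fin 2) (Fin 2) ℂ)) = 1 := by
  ext f g
  simp [tens, one_apply, Finset.prod_boole, funext_iff]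

theorem onQubit_castAdd {a : ℕ} (b : ℕ) (A : Matrix (Fin 2) (Fin 2) ℂ) (j : Fin a) :
    onQubit A (Fin.castAdd b j) = kron (onQubit A j) (1 : QMat b) := by
  rw [onQubit, onQubit, ← tens_one, kron_tens]
  congr 1
  ext1 k
  refine Fin.addCases (fun i => ?_) (fun i => ?_) k
  · simp
  · simp [Fin.ext_iff]
    omega

theorem onQubit_PZ_eq_tens_pauli {n : ℕ} (j : Fin n) :
    onQubit PZ j = tens fun i => pauli ((Pi.single j 3 : Fin n → Fin 4) i) := by
  rw [onQubit]
  congr 1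
  funext i
  by_cases h : i = j <;> simp [h, pauli]

theorem hsInner_real_smul_left {n : ℕ} (r : ℝ) (A B : QMat n) :
    hsInner (r • A) B = r * hsInner A B := by
  simp [hsInner, conjTranspose_smul, Complex.real_smul]

theorem hsInner_kron {a b : ℕ} (A C : QMat a) (B D : QMat b) :
    hsInner (kron A B) (kron C D) = hsInner A C * hsInner B D := by
  simp only [hsInner, kron_eq_reindex_kronecker, reindex_apply, conjTranspose_submatrix,
    submatrix_mul_equiv, conjTranspose_kronecker, ← mul_kronecker_mul, ← trace_kronecker]
  exact Fintype.sum_equiv (Fin.appendEquiv a b).symm _ _ fun _ => rfl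

theorem hsInner_tens {n : ℕ} (As Bs : Fin n → Matrix (Fin 2) (Fin 2) ℂ) :
    hsInner (tens As) (tens Bs) = ∏ k, ((As k)ᴴ * Bs k).trace := by
  simp only [hsInner, trace, diag, mul_apply, conjTranspose_apply,
    tens, of_apply, Fintype.prod_sum, ← Finset.prod_mul_distrib, star_prod]

theorem hsInner_onQubit_one {n : ℕ} (A : Matrix (Fin 2) (Fin 2) ℂ) (j : Fin n) :
    hsInner (onQubit A j) 1 = star A.trace * 2 ^ (n - 1) := by
  rw [← tens_one, onQubit, hsInner_tens]
  simp [apply_ite, trace_conjTranspose, Finset.prod_ite, Finset.filter_eq', Finset.filter_ne',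
    Finset.card_erase_of_mem]

theorem trace_PZ : PZ.trace = 0 := by
  simp [PZ, trace_fin_two]

theorem trace_conjTranspose_pauli_mul (a b : Fin 4) :
    ((pauli a)ᴴ * pauli b).trace = if a = b then 2 else 0 := by
  fin_cases a <;> fin_cases b <;>
    simp [pauli, PX, PY, PZ, trace_fin_two, mul_apply] <;> norm_num

theorem hsInner_tens_pauli {n : ℕ} (ps qs : Fin n → Fin 4) :
    hsInner (tens fun i => pauli (ps i)) (tens fun i => pauli (qs i)) =
      if ps = qs then 2 ^ n else 0 := by
  simp [hsInner_tens, trace_conjTranspose_pauli_mul, Finset.prod_ite_zero, funext_iff]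

theorem tens_pauli_eq_one_iff {n : ℕ} (ps : Fin n → Fin 4) :
    tens (fun i => pauli (ps i)) = 1 ↔ ps = 0 := by
  have hzero : tens (fun i => pauli ((0 : Fin n → Fin 4) i)) = 1 := tens_one
  refine ⟨fun h => ?_, fun h => h ▸ hzero⟩
  have horth := hsInner_tens_pauli ps 0
  rw [h, ← hzero, hsInner_tens_pauli, if_pos rfl] at horth
  simpa using horth

theorem hsInner_Bbasis_onQubit_PZ {nrad norb : ℕ} (hb : 0 < norb) (P : QMat nrad) (ε : ℂ)
    (j : Fin nrad) :
    hsInner (Bbasis nrad norb hb P ε) (onQubit PZ (Fin.castAdd norb j)) =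
      (((√(2 ^ (nrad + norb)))⁻¹ * √2 * 2 ^ (norb - 1) : ℝ) : ℂ) * hsInner P (onQubit PZ j) := by
  have htrace : (((√2)⁻¹ : ℝ) • ((1 : Matrix (Fin 2) (Fin 2) ℂ) + ε • PZ)).trace = √2 := by
    have hsqrt : ((√2)⁻¹ * 2 : ℝ) = √2 := by rw [inv_mul_eq_div, Real.div_sqrt]
    simp only [trace_smul, trace_add, trace_one, trace_PZ]
    simpa [Complex.real_smul] using congrArg ((↑) : ℝ → ℂ) hsqrt
  rw [Bbasis, hsInner_real_smul_left, onQubit_castAdd, hsInner_kron, hsInner_onQubit_one,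
    htrace, Complex.star_def, Complex.conj_ofReal]
  push_cast
  ring

theorem purity_Zy_general (nrad norb : ℕ) (h2 : 1 ≤ norb)
    (y : Fin (nrad + norb)) (hy : (y : ℕ) < nrad)
    (ε : ℂ) :
    ∑ ps ∈ Finset.univ.filter
        (fun ps : Fin nrad → Fin 4 => tens (fun i => pauli (ps i)) ≠ 1),
      ‖hsInner (Bbasis nrad norb h2 (tens fun i => pauli (ps i)) ε)
          (onQubit PZ y)‖ ^ 2
      = 2 ^ (nrad + norb - 1) := by
  obtain ⟨j, rfl⟩ : ∃ j : Fin nrad, Fin.castAdd norb j = y := ⟨⟨y, hy⟩, rfl⟩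
  obtain ⟨b, rfl⟩ : ∃ b, norb = b + 1 := ⟨norb - 1, by omega⟩
  have hconst : ((√(2 ^ (nrad + (b + 1))))⁻¹ * √2 * 2 ^ b * 2 ^ nrad : ℝ) ^ 2 =
      2 ^ (nrad + b) := by
    have hsqrt2 : √2 ^ 2 = (2 : ℝ) := Real.sq_sqrt (by norm_num)
    have hn : √(2 ^ (nrad + (b + 1))) ^ 2 = (2 : ℝ) ^ (nrad + (b + 1)) :=
      Real.sq_sqrt (by positivity)
    simp only [mul_pow, inv_pow, hsqrt2, hn, ← pow_mul]
    field_simp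
    ring
  simp_rw [ne_eq, tens_pauli_eq_one_iff, hsInner_Bbasis_onQubit_PZ, onQubit_PZ_eq_tens_pauli,
    hsInner_tens_pauli]
  rw [Finset.sum_eq_single_of_mem (Pi.single j 3) (by simp) fun ps _ h => by simp [h],
    show nrad + (b + 1) - 1 = nrad + b by omega, ← hconst]
  simp [mul_pow, sq_abs]

/-- For a radial qubit `y` and sign `ε ∈ {1,-1}`, the sum over all
nontrivial Pauli strings `P` on the radial qubits of `|⟨B_P^{(ε)}, Z_y⟩|²` equals
`2^{n-1}` (the `𝔤_±`-purity of the observable `Z_y`). -/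
theorem purity_Zy (nrad norb : ℕ) (h1 : 1 ≤ nrad) (h2 : 1 ≤ norb)
    (y : Fin (nrad + norb)) (hy : (y : ℕ) < nrad)
    (ε : ℂ) (hε : ε = 1 ∨ ε = -1) :
    ∑ ps ∈ Finset.univ.filter
        (fun ps : Fin nrad → Fin 4 => tens (fun i => pauli (ps i)) ≠ 1),
      ‖hsInner (Bbasis nrad norb h2 (tens fun i => pauli (ps i)) ε)
          (onQubit PZ y)‖ ^ 2
      = 2 ^ (nrad + norb - 1) :=
  purity_Zy_general nrad norb h2 y hy ε
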